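/- For t ∈ ℝ let v_t : {(x,y) : x > 0} × ℝ → ℝ³ be v_t(x,y) = ( −(coth(√3 x) + (2/√3)cos t)·e^{2(−x cos t + y sin t)}, −(coth(√3 x) − (cos t − √3 sin t)/√3)·e^{(cos t − √3 sin t)x + (−sin t − √3 cos t)y}, −(coth(√3 x) − (cos t + √3 sin t)/√3)·e^{(cos t + √3 sin t)x + (−sin t + √3 cos t)y} ). Then for every t and all x > 0, y ∈ ℝ: det[∂ₓv_t, ∂ᵧv_t, ∂ₓᵧv_t] = 0 and det[∂ₓv_t, ∂ᵧv_t, ∂ₓₓv_t] = det[∂ₓv_t, ∂ᵧv_t, ∂ᵧᵧv_t]; i.e. (x,y) are isothermal coordinates for the affine metric of every member of the associated family. -/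

import Mathlib

/-- Real hyperbolic cotangent. -/
noncomputable def coth (x : ℝ) : ℝ := Real.cosh x / Real.sinh x

/-- The associated family (at loop parameter `λ = e^{3it}`) of Hildebrand's case-1
complete hyperbolic affine sphere, up to a constant invertible matrix factor. -/
noncomputable def vt (t x y : ℝ) : Fin 3 → ℝ :=
  ![ -(coth (Real.sqrt 3 * x) + (2 / Real.sqrt 3) * Real.cos t) *
       Real.exp (2 * (-x * Real.cos t + y * Real.sin t)),
     -(coth (Real.sqrt 3 * x) - (Real.cos t - Real.sqrt 3 * Real.sin t) / Real.sqrt 3) *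
       Real.exp ((Real.cos t - Real.sqrt 3 * Real.sin t) * x +
         (-Real.sin t - Real.sqrt 3 * Real.cos t) * y),
     -(coth (Real.sqrt 3 * x) - (Real.cos t + Real.sqrt 3 * Real.sin t) / Real.sqrt 3) *
       Real.exp ((Real.cos t + Real.sqrt 3 * Real.sin t) * x +
         (-Real.sin t + Real.sqrt 3 * Real.cos t) * y) ]

/-- `∂ₓ vt`. -/
noncomputable def vtx (t x y : ℝ) : Fin 3 → ℝ := fun i => deriv (fun s => vt t s y i) x
/-- `∂ᵧ vt`. -/
noncomputable def vty (t x y : ℝ) : Fin 3 → ℝ := fun i => deriv (fun s => vt t x s i) y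
/-- `∂ₓₓ vt`. -/
noncomputable def vtxx (t x y : ℝ) : Fin 3 → ℝ := fun i => deriv (fun s => vtx t s y i) x
/-- `∂ₓᵧ vt`. -/
noncomputable def vtxy (t x y : ℝ) : Fin 3 → ℝ := fun i => deriv (fun s => vtx t x s i) y
/-- `∂ᵧᵧ vt`. -/
noncomputable def vtyy (t x y : ℝ) : Fin 3 → ℝ := fun i => deriv (fun s => vty t x s i) y

/-!
Put `k = √3 coth (√3 x)`, a solution of the Riccati equation `k' = 3 - k²`, and let
`Aᵢ x + Bᵢ y` be the exponent of the `i`-th component of `vt`. Then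
`vtᵢ = -(1/√3) e^{Aᵢ x + Bᵢ y} (k - Aᵢ)`, and every derivative entering `L`, `M`, `N` is the
same column factor `-(1/√3) e^{Aᵢ x + Bᵢ y}` times a polynomial in `k, Aᵢ, Bᵢ`; the factor only
scales the determinants. The points `zᵢ = Aᵢ + Bᵢ i = 2 e^{iθᵢ}` have angles `2π/3` apart, so
they share `w = e^{3iθᵢ}` and satisfy `zᵢ² = 2 w z̄ᵢ`. These relations write each polynomial row
as a combination of the rows `1, A, B` with coefficients independent of `i`, so `M` and `L - N`
become `3 × 3` determinants in `k` and `w`, which are multiples of `|w|² - 1`.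
-/

open Matrix Real Filter Topology

lemma det_of_mul_rows {R : Type*} [CommRing R] (v r₀ r₁ r₂ : Fin 3 → R) :
    (of ![v * r₀, v * r₁, v * r₂]).det = (∏ i, v i) * (of ![r₀, r₁, r₂]).det := by
  rw [← det_mul_row]
  congr 1
  ext j i
  fin_cases j <;> simp

lemma det_of_eq_det_mul {R : Type*} [CommRing R] (C : Matrix (Fin 3) (Fin 3) R)
    (r : Fin 3 → Fin 3 → R) (A B : Fin 3 → R)
    (h : ∀ j i, r j i = C j 0 + C j 1 * A i + C j 2 * B i) :
    (of r).det = C.det * (of ![1, A, B]).det := by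
  rw [← det_mul]
  congr 1
  ext j i
  simp [mul_apply, Fin.sum_univ_three, h, mul_comm]

/-- With `z = a + b i` and `w = p + q i`: `z² = 2 w z̄` and `|z| = 2`, the relations satisfied by
`z = 2 e^{iθ}` when `w = e^{3iθ}`. -/
def IsTripledAngle (p q a b : ℝ) : Prop :=
  a ^ 2 = 2 + p * a + q * b ∧ a * b = q * a - p * b ∧ b ^ 2 = 2 - p * a - q * b

lemma isTripledAngle_two_cos_two_sin (θ : ℝ) :
    IsTripledAngle (cos (3 * θ)) (sin (3 * θ)) (2 * cos θ) (2 * sin θ) := by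
  have h := sin_sq_add_cos_sq θ
  refine ⟨?_, ?_, ?_⟩ <;> rw [cos_three_mul, sin_three_mul]
  · linear_combination (2 - 8 * cos θ ^ 2 + 8 * sin θ ^ 2) * h
  · linear_combination 8 * cos θ * sin θ * h
  · linear_combination (2 + 8 * cos θ ^ 2 - 8 * sin θ ^ 2) * h

def profileX (k a : ℝ) : ℝ := 3 - k ^ 2 + a * (k - a)

def profileXX (k a : ℝ) : ℝ := (a - 2 * k) * (3 - k ^ 2) + a * profileX k a

section Determinants

variable {p q k : ℝ} {A B : Fin 3 → ℝ}

theorem det_profileX_mixed_eq_zero (hpq : p ^ 2 + q ^ 2 = 1)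
    (hAB : ∀ i, IsTripledAngle p q (A i) (B i)) :
    (of ![fun i => profileX k (A i), fun i => B i * (k - A i),
      fun i => B i * profileX k (A i)]).det = 0 := by
  have hC : (!![1 - k ^ 2, k - p, -q; 0, -q, k + p;
      -2 * q, k * q, 1 - k ^ 2 - k * p + p ^ 2 + q ^ 2] : Matrix (Fin 3) (Fin 3) ℝ).det = 0 := by
    simp only [det_fin_three, of_apply, cons_val', cons_val_zero, cons_val_one, cons_val_two,
      empty_val', cons_val_fin_one, head_cons, tail_cons, head_fin_const]
    linear_combination q * (1 + k ^ 2) * hpq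
  rw [det_of_eq_det_mul _ _ A B, hC, zero_mul]
  intro j i
  obtain ⟨h1, h2, h3⟩ := hAB i
  fin_cases j <;>
    simp only [profileX, of_apply, cons_val, Fin.zero_eta, Fin.mk_one, Fin.reduceFinMk]
  · linear_combination (-1) * h1
  · linear_combination (-1) * h2
  · linear_combination (-B i) * h1 + (k - p) * h2 - q * h3

theorem det_profileXX_eq_det_profileYY (hpq : p ^ 2 + q ^ 2 = 1)
    (hAB : ∀ i, IsTripledAngle p q (A i) (B i)) :
    (of ![fun i => profileX k (A i), fun i => B i * (k - A i),
      fun i => profileXX k (A i)]).det =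
    (of ![fun i => profileX k (A i), fun i => B i * (k - A i),
      fun i => B i ^ 2 * (k - A i)]).det := by
  set CL : Matrix (Fin 3) (Fin 3) ℝ := !![1 - k ^ 2, k - p, -q; 0, -q, k + p;
    2 * k ^ 3 - 4 * k - 2 * p, 4 - 2 * k ^ 2 + p * k - p ^ 2 - q ^ 2, q * k]
  set CN : Matrix (Fin 3) (Fin 3) ℝ := !![1 - k ^ 2, k - p, -q; 0, -q, k + p;
    2 * k + 2 * p, -p * k - p ^ 2 - q ^ 2, -q * k]
  have hdet : CL.det = CN.det := by
    simp only [CL, CN, det_fin_three, of_apply, cons_val', cons_val_zero, cons_val_one,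
      cons_val_two, empty_val', cons_val_fin_one, head_cons, tail_cons, head_fin_const]
    linear_combination (4 * k + 4 * p) * hpq
  calc _ = CL.det * (of ![1, A, B]).det := det_of_eq_det_mul CL _ A B ?_
    _ = CN.det * (of ![1, A, B]).det := by rw [hdet]
    _ = _ := (det_of_eq_det_mul CN _ A B ?_).symm
  all_goals
    intro j i
    obtain ⟨h1, h2, h3⟩ := hAB i
    fin_cases j <;>
      simp only [CL, CN, profileX, profileXX, of_apply, cons_val, Fin.zero_eta, Fin.mk_one,
        Fin.reduceFinMk]
  · linear_combination (-1) * h1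
  · linear_combination (-1) * h2
  · linear_combination (k - A i - p) * h1 - q * h2
  · linear_combination (-1) * h1
  · linear_combination (-1) * h2
  · linear_combination (k + p) * h3 - (B i + q) * h2

end Determinants

lemma hasDerivAt_mul_coth_mul {a x : ℝ} (h : a * x ≠ 0) :
    HasDerivAt (fun s => a * coth (a * s)) (a ^ 2 - (a * coth (a * x)) ^ 2) x := by
  have hlin : HasDerivAt (fun s : ℝ => a * s) a x := by
    simpa using (hasDerivAt_id' x).const_mul a
  refine ((hlin.cosh.div hlin.sinh (sinh_ne_zero.mpr h)).const_mul a).congr_deriv ?_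
  simp only [coth]
  field_simp

noncomputable def scaledCoth (x : ℝ) : ℝ := √3 * coth (√3 * x)

lemma hasDerivAt_scaledCoth {x : ℝ} (hx : x ≠ 0) :
    HasDerivAt scaledCoth (3 - scaledCoth x ^ 2) x := by
  have h := hasDerivAt_mul_coth_mul (mul_ne_zero (by positivity : √3 ≠ 0) hx)
  rwa [sq_sqrt (by norm_num : (0 : ℝ) ≤ 3)] at h

noncomputable def expAngle (t : ℝ) : Fin 3 → ℝ := ![π - t, -(t + π / 3), π / 3 - t]

noncomputable def expCoeffX (t : ℝ) (i : Fin 3) : ℝ := 2 * cos (expAngle t i)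

noncomputable def expCoeffY (t : ℝ) (i : Fin 3) : ℝ := 2 * sin (expAngle t i)

lemma expCoeffX_eq (t : ℝ) :
    expCoeffX t = ![-2 * cos t, cos t - √3 * sin t, cos t + √3 * sin t] := by
  ext i
  fin_cases i <;> simp [expCoeffX, expAngle, cos_add, cos_sub] <;> ring

lemma expCoeffY_eq (t : ℝ) :
    expCoeffY t = ![2 * sin t, -sin t - √3 * cos t, -sin t + √3 * cos t] := by
  ext i
  fin_cases i <;> simp [expCoeffY, expAngle, sin_add, sin_sub] <;> ring

lemma isTripledAngle_expCoeff (t : ℝ) (i : Fin 3) :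
    IsTripledAngle (-cos (3 * t)) (sin (3 * t)) (expCoeffX t i) (expCoeffY t i) := by
  have h3 : cos (3 * expAngle t i) = -cos (3 * t) ∧ sin (3 * expAngle t i) = sin (3 * t) := by
    fin_cases i
    · show cos (3 * (π - t)) = _ ∧ sin (3 * (π - t)) = _
      simp [show 3 * (π - t) = (π - 3 * t) + 2 * π by ring]
    · show cos (3 * -(t + π / 3)) = _ ∧ sin (3 * -(t + π / 3)) = _
      rw [show 3 * -(t + π / 3) = -(3 * t + π) by ring, cos_neg, sin_neg, cos_add_pi, sin_add_pi]
      simp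
    · show cos (3 * (π / 3 - t)) = _ ∧ sin (3 * (π / 3 - t)) = _
      simp [show 3 * (π / 3 - t) = π - 3 * t by ring]
  rw [← h3.1, ← h3.2]
  exact isTripledAngle_two_cos_two_sin _

noncomputable def colFactor (t x y : ℝ) (i : Fin 3) : ℝ :=
  -(√3)⁻¹ * exp (expCoeffX t i * x + expCoeffY t i * y)

lemma vt_eq (t x y : ℝ) :
    vt t x y = colFactor t x y * fun i => scaledCoth x - expCoeffX t i := by
  ext i
  fin_cases i <;>
    simp only [vt, colFactor, scaledCoth, expCoeffX_eq, expCoeffY_eq, Pi.mul_apply, cons_val,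
      Fin.zero_eta, Fin.mk_one, Fin.reduceFinMk] <;>
    field_simp
  ring

section Derivatives

variable (t : ℝ) (i : Fin 3)

lemma hasDerivAt_colFactor_mul_comp {F : ℝ → ℝ} {F' x : ℝ} (y : ℝ)
    (hF : HasDerivAt F F' (scaledCoth x)) (hx : x ≠ 0) :
    HasDerivAt (fun s => colFactor t s y i * F (scaledCoth s))
      (colFactor t x y i *
        (F' * (3 - scaledCoth x ^ 2) + expCoeffX t i * F (scaledCoth x))) x := by
  have hexp : HasDerivAt (fun s => colFactor t s y i) (colFactor t x y i * expCoeffX t i) x := by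
    refine ((((hasDerivAt_id' x).const_mul _).add_const _).exp.const_mul _).congr_deriv ?_
    simp only [colFactor]
    ring
  refine (hexp.mul (hF.comp x (hasDerivAt_scaledCoth hx))).congr_deriv ?_
  simp only [Function.comp]
  ring

lemma deriv_colFactor_mul_const (x y c : ℝ) :
    deriv (fun s => colFactor t x s i * c) y = colFactor t x y i * (expCoeffY t i * c) := by
  have h : HasDerivAt (fun s => colFactor t x s i * c)
      (colFactor t x y i * (expCoeffY t i * c)) y := by
    refine ((((hasDerivAt_id' y).const_mul _).const_add _).exp.const_mul _ |>.mul_const c)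
      |>.congr_deriv ?_
    simp only [colFactor]
    ring
  exact h.deriv

end Derivatives

section Formulas

variable (t : ℝ) {x : ℝ} (y : ℝ)

lemma vtx_eq (hx : x ≠ 0) :
    vtx t x y = colFactor t x y * fun i => profileX (scaledCoth x) (expCoeffX t i) := by
  ext i
  simp only [vtx, vt_eq, Pi.mul_apply]
  rw [(hasDerivAt_colFactor_mul_comp t i y ((hasDerivAt_id' _).sub_const _) hx).deriv,
    profileX]
  ring

lemma vty_eq :
    vty t x y = colFactor t x y * fun i => expCoeffY t i * (scaledCoth x - expCoeffX t i) := by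
  ext i
  simp only [vty, vt_eq, Pi.mul_apply, deriv_colFactor_mul_const]

lemma vtxy_eq (hx : x ≠ 0) :
    vtxy t x y =
      colFactor t x y * fun i => expCoeffY t i * profileX (scaledCoth x) (expCoeffX t i) := by
  ext i
  simp only [vtxy, vtx_eq t (hx := hx), Pi.mul_apply, deriv_colFactor_mul_const]

lemma vtyy_eq :
    vtyy t x y =
      colFactor t x y * fun i => expCoeffY t i ^ 2 * (scaledCoth x - expCoeffX t i) := by
  ext i
  simp only [vtyy, vty_eq, Pi.mul_apply, deriv_colFactor_mul_const]
  ring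

lemma vtxx_eq (hx : 0 < x) :
    vtxx t x y = colFactor t x y * fun i => profileXX (scaledCoth x) (expCoeffX t i) := by
  ext i
  have hnear : (fun s => vtx t s y i) =ᶠ[𝓝 x]
      fun s => colFactor t s y i * profileX (scaledCoth s) (expCoeffX t i) := by
    filter_upwards [Ioi_mem_nhds hx] with s hs
    rw [vtx_eq t y (ne_of_gt hs)]
    rfl
  have hprofile : HasDerivAt (fun k => profileX k (expCoeffX t i))
      (expCoeffX t i - 2 * scaledCoth x) (scaledCoth x) := by
    unfold profileX
    refine ((((hasDerivAt_id' _).pow 2).const_sub 3).add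
      (((hasDerivAt_id' _).sub_const _).const_mul _)).congr_deriv ?_
    ring
  simp only [vtxx, Pi.mul_apply]
  rw [hnear.deriv_eq, (hasDerivAt_colFactor_mul_comp t i y hprofile hx.ne').deriv, profileXX]

end Formulas

/-- `(x,y)` are isothermal coordinates for the affine metric of every member of the
associated family: `M = 0` and `L = N`. -/
theorem associated_family_isothermal_case1 :
    ∀ t : ℝ, ∀ x : ℝ, 0 < x → ∀ y : ℝ,
      Matrix.det (Matrix.of ![vtx t x y, vty t x y, vtxy t x y]) = 0 ∧
      Matrix.det (Matrix.of ![vtx t x y, vty t x y, vtxx t x y]) =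
        Matrix.det (Matrix.of ![vtx t x y, vty t x y, vtyy t x y]) := by
  intro t x hx y
  have hAB := isTripledAngle_expCoeff t
  have hpq : (-cos (3 * t)) ^ 2 + sin (3 * t) ^ 2 = 1 := by
    rw [neg_sq, cos_sq_add_sin_sq]
  rw [vtx_eq t y hx.ne', vty_eq, vtxy_eq t y hx.ne', vtxx_eq t y hx, vtyy_eq,
    det_of_mul_rows, det_of_mul_rows, det_of_mul_rows,
    det_profileX_mixed_eq_zero hpq hAB, det_profileXX_eq_det_profileYY hpq hAB]
  exact ⟨mul_zero _, rfl⟩
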